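/- In an infinite word over a pushdown alphabet with an infinite MAP ν starting at position i_0, every position i > i_0 is either a position of ν or a position where p_∞ fails (i.e., the MAP through i starts at some j > 0 whose predecessor is a matched call). -/

import Mathlib

/-!
Follow the infinite MAP from `i₀` until it passes `i`. If it does not visit `i`, it jumps over `i`
along a call–return edge `a → b`, so `a < i < b`. Matched pairs do not cross, hence no abstract
path enters the factor `(a, b)` from outside, and the MAP through `i` starts at some `s` with
`a < s ≤ i`. Inside a well-matched factor every return is matched, so `s` is not a return; as `s`
has no abstract predecessor, `s - 1` is a call, and calls inside a well-matched factor are matched.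

Matching is read off the stack height `level`: the return matching a call `c` is the first
position after which the height drops below its value just after `c`.
-/

/-- The type of a position in a word over a pushdown alphabet. -/
inductive SymType : Type
  | call | ret | int
deriving DecidableEq

/-- The factor strictly between `i` and `j` is well matched:
calls and returns balance out, and no prefix has more returns than calls. -/
def wellMatched (kind : ℕ → SymType) (i j : ℕ) : Prop :=
  (((Finset.Ioo i j).filter fun k => kind k = SymType.call).card =
   ((Finset.Ioo i j).filter fun k => kind k = SymType.ret).card) ∧
  ∀ m ∈ Finset.Ioo i j,
    ((Finset.Ioc i m).filter fun k => kind k = SymType.ret).card ≤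
    ((Finset.Ioc i m).filter fun k => kind k = SymType.call).card

/-- `j` is the matching return of the call `i`: the least return `j > i`
such that the factor strictly between `i` and `j` is well matched. -/
def MatchRet (kind : ℕ → SymType) (i j : ℕ) : Prop :=
  kind i = SymType.call ∧ i < j ∧ kind j = SymType.ret ∧ wellMatched kind i j ∧
  ∀ j', i < j' → j' < j → ¬ (kind j' = SymType.ret ∧ wellMatched kind i j')

/-- The abstract successor relation: a matched call maps to its matching
return; any non-call position maps to the next position provided it is not
a return. Unmatched calls (and positions followed by a return) have no
abstract successor. -/
def absSucc (kind : ℕ → SymType) (i j : ℕ) : Prop :=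
  (kind i = SymType.call ∧ MatchRet kind i j) ∨
  (kind i ≠ SymType.call ∧ j = i + 1 ∧ kind (i + 1) ≠ SymType.ret)

/-- `j` is reachable from `i` along abstract successors. -/
def reach (kind : ℕ → SymType) : ℕ → ℕ → Prop := Relation.ReflTransGen (absSucc kind)

/-- `i` and `j` lie on the same maximal abstract path (MAP). -/
def onSameMAP (kind : ℕ → SymType) (i j : ℕ) : Prop := reach kind i j ∨ reach kind j i

/-- `s` is the initial position of a MAP: nothing maps to it. -/
def isMAPStart (kind : ℕ → SymType) (s : ℕ) : Prop := ∀ k, ¬ absSucc kind k s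

/-- `s` is the initial position of the MAP visiting `i`. -/
def startsMAPOf (kind : ℕ → SymType) (s i : ℕ) : Prop := isMAPStart kind s ∧ reach kind s i

/-- The MAP visiting `i` is infinite (has no last position). -/
def infMAP (kind : ℕ → SymType) (i : ℕ) : Prop := ∀ j, reach kind i j → ∃ k, absSucc kind j k

/-- `p_∞` holds at `i` iff the MAP visiting `i` does not start at a position
`s > 0` such that `s - 1` is a call having a matching return. -/
def pInf (kind : ℕ → SymType) (i : ℕ) : Prop :=
  ¬ ∃ s, startsMAPOf kind s i ∧ 0 < s ∧ kind (s - 1) = SymType.call ∧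
    ∃ r, MatchRet kind (s - 1) r

open Finset

def SymType.weight : SymType → ℤ
  | .call => 1
  | .ret => -1
  | .int => 0

theorem SymType.neg_one_le_weight (x : SymType) : -1 ≤ x.weight := by
  cases x <;> decide

/-- The stack height after reading the positions `0, …, n - 1`. -/
def level (kind : ℕ → SymType) (n : ℕ) : ℤ :=
  ∑ k ∈ range n, (kind k).weight

section Level

variable {kind : ℕ → SymType}

theorem level_succ (n : ℕ) : level kind (n + 1) = level kind n + (kind n).weight :=
  sum_range_succ _ _

theorem level_succ_of_call {n : ℕ} (h : kind n = .call) :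
    level kind (n + 1) = level kind n + 1 := by
  rw [level_succ, h, SymType.weight]

theorem level_succ_of_ret {n : ℕ} (h : kind n = .ret) :
    level kind (n + 1) = level kind n - 1 := by
  rw [level_succ, h, SymType.weight, sub_eq_add_neg]

theorem level_sub_one_le_level_succ (n : ℕ) : level kind n - 1 ≤ level kind (n + 1) := by
  rw [level_succ]
  linarith [SymType.neg_one_le_weight (kind n)]

theorem kind_eq_ret_of_level_succ_lt {n : ℕ} (h : level kind (n + 1) < level kind n) :
    kind n = .ret := by
  rw [level_succ] at h
  cases hn : kind n <;> simp_all [SymType.weight]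

theorem kind_eq_call_of_level_lt_succ {n : ℕ} (h : level kind n < level kind (n + 1)) :
    kind n = .call := by
  rw [level_succ] at h
  cases hn : kind n <;> simp_all [SymType.weight]

theorem level_sub_level {a b : ℕ} (h : a ≤ b) :
    level kind b - level kind a =
      (#{k ∈ Ico a b | kind k = .call} : ℤ) - #{k ∈ Ico a b | kind k = .ret} := by
  have hweight (x : SymType) :
      x.weight = (if x = .call then 1 else 0) - (if x = .ret then 1 else 0) := by
    cases x <;> rfl
  rw [level, level, ← sum_Ico_eq_sub _ h]
  simp only [hweight, sum_sub_distrib, sum_boole]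

theorem wellMatched_iff {i j : ℕ} (h : i < j) :
    wellMatched kind i j ↔ level kind j = level kind (i + 1) ∧
      ∀ m, i < m → m < j → level kind (i + 1) ≤ level kind (m + 1) := by
  have hIoo : Ioo i j = Ico (i + 1) j := by ext; simp only [mem_Ioo, mem_Ico]; omega
  have hIoc (m : ℕ) : Ioc i m = Ico (i + 1) (m + 1) := by ext; simp only [mem_Ioc, mem_Ico]; omega
  have hbal := level_sub_level (kind := kind) (show i + 1 ≤ j by omega)
  have hpre (m : ℕ) (hm : i < m) := level_sub_level (kind := kind) (show i + 1 ≤ m + 1 by omega)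
  simp only [wellMatched, hIoc, mem_Ioo, and_imp]
  rw [hIoo]
  refine and_congr ⟨fun hb => by rw [hb] at hbal; linarith, fun hb => by rw [hb] at hbal; omega⟩
    (forall_congr' fun m => imp_congr_right fun h1 => imp_congr_right fun h2 => ?_)
  rw [← Nat.cast_le (α := ℤ)]
  constructor <;> intro <;> linarith [hpre m h1]

theorem matchRet_iff {c r : ℕ} :
    MatchRet kind c r ↔ kind c = .call ∧ c < r ∧ level kind (r + 1) < level kind (c + 1) ∧
      ∀ m, c < m → m ≤ r → level kind (c + 1) ≤ level kind m := by
  constructor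
  · rintro ⟨hc, hcr, hr, hwm, -⟩
    obtain ⟨hbal, hpre⟩ := (wellMatched_iff hcr).mp hwm
    refine ⟨hc, hcr, by rw [level_succ_of_ret hr]; omega, fun m h1 h2 => ?_⟩
    rcases Nat.lt_or_ge (c + 1) m with hm | hm
    · simpa [Nat.sub_add_cancel (by omega : 1 ≤ m)] using hpre (m - 1) (by omega) (by omega)
    · obtain rfl : m = c + 1 := by omega
      exact le_rfl
  · rintro ⟨hc, hcr, hlt, hmin⟩
    have hr := hmin r hcr le_rfl
    have hdrop := level_sub_one_le_level_succ (kind := kind) r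
    have hret : kind r = .ret := kind_eq_ret_of_level_succ_lt (by omega)
    have hwm : wellMatched kind c r :=
      (wellMatched_iff hcr).mpr ⟨by omega, fun m h1 h2 => hmin _ (by omega) (by omega)⟩
    refine ⟨hc, hcr, hret, hwm, ?_⟩
    rintro r' h1 h2 ⟨hret', hwm'⟩
    have := (wellMatched_iff h1).mp hwm'
    have := level_succ_of_ret hret'
    have := hmin (r' + 1) (by omega) (by omega)
    omega

theorem exists_matchRet_of_ret {p : ℕ} (hp : kind p = .ret)
    (h : ∃ n ≤ p, level kind n ≤ level kind (p + 1)) : ∃ c, MatchRet kind c p := by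
  classical
  obtain ⟨n, hnp, hn⟩ := h
  set c := Nat.findGreatest (fun n => level kind n ≤ level kind (p + 1)) p
  have hc : level kind c ≤ level kind (p + 1) :=
    Nat.findGreatest_spec (P := fun n => level kind n ≤ level kind (p + 1)) hnp hn
  have habove (m : ℕ) (h1 : c < m) (h2 : m ≤ p) : level kind (p + 1) < level kind m :=
    not_le.mp (Nat.findGreatest_is_greatest h1 h2)
  have hcp : c < p := by
    have := level_succ_of_ret hp
    refine lt_of_le_of_ne (Nat.findGreatest_le p) fun hcp => ?_
    rw [hcp] at hc
    omega
  have hup := habove (c + 1) (by omega) (by omega)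
  have hcall : kind c = .call := kind_eq_call_of_level_lt_succ (by omega)
  have hstep := level_succ_of_call hcall
  exact ⟨c, matchRet_iff.mpr ⟨hcall, hcp, by omega, fun m h1 h2 => by
    have := habove m h1 h2; omega⟩⟩

theorem exists_matchRet_of_call {c : ℕ} (hc : kind c = .call)
    (h : ∃ n, c < n ∧ level kind n < level kind (c + 1)) : ∃ r, MatchRet kind c r := by
  classical
  have hfind := Nat.find_spec h
  have hmin (m : ℕ) (hm : m < Nat.find h) : ¬(c < m ∧ level kind m < level kind (c + 1)) :=
    Nat.find_min h hm
  have hne : Nat.find h ≠ c + 1 := fun he => by rw [he] at hfind; exact lt_irrefl _ hfind.2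
  refine ⟨Nat.find h - 1, matchRet_iff.mpr ⟨hc, by omega, ?_, fun m h1 h2 => ?_⟩⟩
  · rw [Nat.sub_add_cancel (by omega)]
    exact hfind.2
  · exact not_lt.mp fun hlt => hmin m (by omega) ⟨h1, hlt⟩

end Level

namespace MatchRet

variable {kind : ℕ → SymType} {a b : ℕ}

theorem unique {b' : ℕ} (h : MatchRet kind a b) (h' : MatchRet kind a b') : b = b' := by
  by_contra hne
  rcases lt_or_gt_of_ne hne with hlt | hlt
  · exact h'.2.2.2.2 b h.2.1 hlt ⟨h.2.2.1, h.2.2.2.1⟩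
  · exact h.2.2.2.2 b' h'.2.1 hlt ⟨h'.2.2.1, h'.2.2.2.1⟩

theorem not_cross {c d : ℕ} (h : MatchRet kind a b) (h' : MatchRet kind c d)
    (hac : a < c) (hcb : c < b) (hbd : b < d) : False := by
  obtain ⟨-, -, hb, hab⟩ := matchRet_iff.mp h
  obtain ⟨hc, -, -, hcd⟩ := matchRet_iff.mp h'
  have := hab c hac hcb.le
  have := hcd (b + 1) (by omega) hbd
  have := level_succ_of_call hc
  omega

theorem exists_matchRet_of_ret {p : ℕ} (h : MatchRet kind a b) (hap : a < p) (hpb : p < b)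
    (hp : kind p = .ret) : ∃ c, MatchRet kind c p :=
  _root_.exists_matchRet_of_ret hp
    ⟨a + 1, by omega, (matchRet_iff.mp h).2.2.2 (p + 1) (by omega) (by omega)⟩

theorem exists_matchRet_of_call {c : ℕ} (h : MatchRet kind a b) (hac : a < c) (hcb : c < b)
    (hc : kind c = .call) : ∃ r, MatchRet kind c r := by
  obtain ⟨-, -, hb, hab⟩ := matchRet_iff.mp h
  have := hab c hac hcb.le
  have := level_succ_of_call hc
  exact _root_.exists_matchRet_of_call hc ⟨b + 1, by omega, by omega⟩

end MatchRet

theorem Relation.ReflTransGen.exists_step_across {α : Type*} [LinearOrder α]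
    {R : α → α → Prop} {s t x : α} (h : ReflTransGen R s t) (hs : s < x) (ht : x ≤ t) :
    ∃ a b, ReflTransGen R s a ∧ R a b ∧ ReflTransGen R b t ∧ a < x ∧ x ≤ b := by
  induction h using Relation.ReflTransGen.head_induction_on with
  | refl => exact absurd (hs.trans_le ht) (lt_irrefl _)
  | @head s s' hss' hs't ih =>
    by_cases hx : x ≤ s'
    · exact ⟨s, s', .refl, hss', hs't, hs, hx⟩
    · obtain ⟨a, b, hs'a, hab, hbt, hax, hxb⟩ := ih (not_le.mp hx)
      exact ⟨a, b, .head hss' hs'a, hab, hbt, hax, hxb⟩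

section Paths

variable {kind : ℕ → SymType}

theorem absSucc_lt {a b : ℕ} (h : absSucc kind a b) : a < b := by
  rcases h with ⟨-, -, h, -⟩ | ⟨-, rfl, -⟩ <;> omega

theorem reach_le {a b : ℕ} (h : reach kind a b) : a ≤ b := by
  induction h with
  | refl => exact le_rfl
  | tail _ hbc ih => exact ih.trans (absSucc_lt hbc).le

theorem matchRet_of_absSucc {a b : ℕ} (h : absSucc kind a b) (hb : a + 1 < b) :
    MatchRet kind a b := by
  rcases h with ⟨-, h⟩ | ⟨-, rfl, -⟩
  · exact h
  · omega

variable (kind) in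
theorem exists_startsMAPOf (i : ℕ) : ∃ s, startsMAPOf kind s i := by
  induction i using Nat.strong_induction_on with
  | _ i ih =>
    by_cases h : isMAPStart kind i
    · exact ⟨i, h, .refl⟩
    · obtain ⟨k, hk⟩ := not_forall_not.mp h
      obtain ⟨s, hs, hsk⟩ := ih k (absSucc_lt hk)
      exact ⟨s, hs, hsk.tail hk⟩

theorem infMAP.exists_reach_ge {i0 : ℕ} (hinf : infMAP kind i0) (n : ℕ) :
    ∃ j, reach kind i0 j ∧ n ≤ j := by
  induction n with
  | zero => exact ⟨i0, .refl, Nat.zero_le _⟩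
  | succ n ih =>
    obtain ⟨j, hj, hnj⟩ := ih
    obtain ⟨k, hk⟩ := hinf j hj
    exact ⟨k, hj.tail hk, (absSucc_lt hk).trans_le' hnj⟩

theorem MatchRet.lt_of_reach {a b s i : ℕ} (hM : MatchRet kind a b) (h : reach kind s i)
    (hai : a < i) (hib : i < b) : a < s := by
  by_contra! hsa
  obtain ⟨c, d, -, hcd, hdi, hca, had⟩ := h.exists_step_across (Nat.lt_succ_of_le hsa) hai
  have hdb : d < b := (reach_le hdi).trans_lt hib
  rcases Nat.lt_or_ge c a with hlt | hge
  · exact (matchRet_of_absSucc hcd (by omega)).not_cross hM hlt (by omega) hdb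
  · obtain rfl : c = a := by omega
    rcases hcd with ⟨-, hM'⟩ | ⟨hnc, -, -⟩
    · exact hdb.ne (hM'.unique hM)
    · exact hnc hM.1

theorem isMAPStart.matched_call_pred {a b s : ℕ} (hs : isMAPStart kind s)
    (hM : MatchRet kind a b) (has : a < s) (hsb : s < b) :
    kind (s - 1) = .call ∧ ∃ r, MatchRet kind (s - 1) r := by
  have hsr : kind s ≠ .ret := fun hret =>
    let ⟨c, hc⟩ := hM.exists_matchRet_of_ret has hsb hret
    hs c (.inl ⟨hc.1, hc⟩)
  have hcall : kind (s - 1) = .call := by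
    by_contra hnc
    exact hs (s - 1) (.inr ⟨hnc, by omega, by rwa [Nat.sub_add_cancel (by omega)]⟩)
  refine ⟨hcall, ?_⟩
  rcases Nat.lt_or_ge a (s - 1) with hlt | hge
  · exact hM.exists_matchRet_of_call hlt (by omega) hcall
  · obtain rfl : a = s - 1 := by omega
    exact ⟨b, hM⟩

end Paths

theorem positions_after_infinite_MAP_start_general (kind : ℕ → SymType) (i0 : ℕ)
    (hinf : infMAP kind i0)
    (i : ℕ) (hi : i0 < i) :
    reach kind i0 i ∨ ¬ pInf kind i := by
  by_cases hreach : reach kind i0 i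
  · exact .inl hreach
  right
  obtain ⟨t, hi0t, hit⟩ := hinf.exists_reach_ge i
  obtain ⟨a, b, hi0a, hab, -, hai, hib⟩ := hi0t.exists_step_across hi hit
  have hib : i < b := lt_of_le_of_ne hib fun h => hreach (h ▸ hi0a.tail hab)
  have hM : MatchRet kind a b := matchRet_of_absSucc hab (by omega)
  obtain ⟨s, hs, hsi⟩ := exists_startsMAPOf kind i
  have has : a < s := hM.lt_of_reach hsi hai hib
  obtain ⟨hcall, hmatched⟩ := hs.matched_call_pred hM has ((reach_le hsi).trans_lt hib)
  exact fun hp => hp ⟨s, ⟨hs, hsi⟩, by omega, hcall, hmatched⟩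

/-- if an infinite MAP starts at `i_0`, every position `i > i_0`
is either on that MAP or a position where `p_∞` fails. -/
theorem positions_after_infinite_MAP_start (kind : ℕ → SymType) (i0 : ℕ)
    (hstart : isMAPStart kind i0) (hinf : infMAP kind i0)
    (i : ℕ) (hi : i0 < i) :
    reach kind i0 i ∨ ¬ pInf kind i :=
  positions_after_infinite_MAP_start_general kind i0 hinf i hi
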